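/- arXiv:2411.12687 — 5 statements merged into one kernel-verified Lean document; each statement's English description precedes it below -/
import Mathlib

section
/- Let V be a real inner product space, a : V × V → ℝ a bilinear form that is V-elliptic with constant α > 0 (i.e. a(v, v) ≥ α‖v‖² for all v ∈ V), λ ≥ 0, l : V → ℝ linear, and u₀ ∈ V. If u ∈ V satisfies a(u, v) = l(v) for all v ∈ V, and u^λ ∈ V satisfies a(u^λ, v) + λ⟪u^λ, v⟫ = l(v) + λ⟪u₀, v⟫ for all v ∈ V, then ‖u − u^λ‖ ≤ (λ/α)·‖u₀ − u^λ‖. -/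
open scoped RealInnerProductSpace

/-- If `a` is `V`-elliptic with constant `α > 0`, `u` solves the original variational
problem and `uλ` solves the regularized one, then `‖u - uλ‖ ≤ (λ/α) ‖u₀ - uλ‖`. -/
theorem regularization_error_bound
    {V : Type*} [NormedAddCommGroup V] [InnerProductSpace ℝ V]
    (a : V →ₗ[ℝ] V →ₗ[ℝ] ℝ) (l : V →ₗ[ℝ] ℝ)
    (α : ℝ) (hα : 0 < α) (hell : ∀ v : V, α * ‖v‖ ^ 2 ≤ a v v)
    (lam : ℝ) (hlam : 0 ≤ lam) (u₀ u ulam : V)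
    (hu : ∀ v : V, a u v = l v)
    (hulam : ∀ v : V, a ulam v + lam * ⟪ulam, v⟫ = l v + lam * ⟪u₀, v⟫) :
    ‖u - ulam‖ ≤ (lam / α) * ‖u₀ - ulam‖ := by
  set e := u - ulam with he
  have key : a e e = lam * ⟪ulam - u₀, e⟫ := by
    have h1 := hu e
    have h2 := hulam e
    have : a e e = a u e - a ulam e := by simp only [he, map_sub, LinearMap.sub_apply]; ring
    rw [this, h1]
    have : a ulam e = l e + lam * ⟪u₀, e⟫ - lam * ⟪ulam, e⟫ := by linarith
    rw [this, inner_sub_left]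
    ring
  have hb : α * ‖e‖ ^ 2 ≤ lam * (‖u₀ - ulam‖ * ‖e‖) := by
    calc α * ‖e‖ ^ 2 ≤ a e e := hell e
    _ = lam * ⟪ulam - u₀, e⟫ := key
    _ ≤ lam * (‖u₀ - ulam‖ * ‖e‖) := by
        apply mul_le_mul_of_nonneg_left _ hlam
        calc ⟪ulam - u₀, e⟫ ≤ ‖ulam - u₀‖ * ‖e‖ := real_inner_le_norm _ _
        _ = ‖u₀ - ulam‖ * ‖e‖ := by rw [norm_sub_rev]
  rcases eq_or_lt_of_le (norm_nonneg e) with h0 | h0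
  · rw [← h0]
    positivity
  · rw [div_mul_eq_mul_div, le_div_iff₀ hα]
    nlinarith [sq_nonneg ‖e‖]
end

section
/- Let V be a real inner product space, a : V × V → ℝ a bilinear form that is V-elliptic with constant α > 0, λ ≥ 0, l : V → ℝ linear, and u₀ ∈ V. Let u ∈ V satisfy a(u, v) = l(v) for all v ∈ V, let u^λ ∈ V satisfy a(u^λ, v) + λ⟪u^λ, v⟫ = l(v) + λ⟪u₀, v⟫ for all v ∈ V, and let u_h^λ ∈ V be arbitrary. Then ‖u − u^λ‖ ≤ (λ/α)·‖u₀ − u_h^λ‖ + (λ/α)·‖u^λ − u_h^λ‖. -/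
open scoped RealInnerProductSpace

/-- Splitting the regularization error via an arbitrary element `uh`:
`‖u - uλ‖ ≤ (λ/α) ‖u₀ - uh‖ + (λ/α) ‖uλ - uh‖`. -/
theorem regularization_error_split
    {V : Type*} [NormedAddCommGroup V] [InnerProductSpace ℝ V]
    (a : V →ₗ[ℝ] V →ₗ[ℝ] ℝ) (l : V →ₗ[ℝ] ℝ)
    (α : ℝ) (hα : 0 < α) (hell : ∀ v : V, α * ‖v‖ ^ 2 ≤ a v v)
    (lam : ℝ) (hlam : 0 ≤ lam) (u₀ u ulam uh : V)
    (hu : ∀ v : V, a u v = l v)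
    (hulam : ∀ v : V, a ulam v + lam * ⟪ulam, v⟫ = l v + lam * ⟪u₀, v⟫) :
    ‖u - ulam‖ ≤ (lam / α) * ‖u₀ - uh‖ + (lam / α) * ‖ulam - uh‖ := by
  set e := u - ulam with he
  have key : ∀ v : V, a e v = lam * ⟪ulam - uh, v⟫ + lam * ⟪uh - u₀, v⟫ := by
    intro v
    have h1 := hu v
    have h2 := hulam v
    have : a e v = a u v - a ulam v := by simp [he, map_sub]
    rw [this, h1]
    have : a ulam v = l v + lam * ⟪u₀, v⟫ - lam * ⟪ulam, v⟫ := by linarith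
    rw [this]
    simp only [inner_sub_left]
    ring
  have hee : α * ‖e‖ ^ 2 ≤ lam * (‖ulam - uh‖ * ‖e‖) + lam * (‖u₀ - uh‖ * ‖e‖) := by
    have h1 := hell e
    have h2 := key e
    have c1 : ⟪ulam - uh, e⟫ ≤ ‖ulam - uh‖ * ‖e‖ := real_inner_le_norm _ _
    have c2 : ⟪uh - u₀, e⟫ ≤ ‖uh - u₀‖ * ‖e‖ := real_inner_le_norm _ _
    have hn : ‖uh - u₀‖ = ‖u₀ - uh‖ := norm_sub_rev _ _
    have d1 := mul_le_mul_of_nonneg_left c1 hlam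
    have d2 := mul_le_mul_of_nonneg_left c2 hlam
    rw [hn] at d2
    linarith
  rcases eq_or_lt_of_le (norm_nonneg e) with h0 | h0
  · rw [← h0]
    positivity
  · rw [div_mul_eq_mul_div, div_mul_eq_mul_div, ← add_div, le_div_iff₀ hα]
    have := mul_le_mul_of_nonneg_right hee (by positivity : (0:ℝ) ≤ ‖e‖⁻¹)
    calc ‖e‖ * α = (α * ‖e‖ ^ 2) * ‖e‖⁻¹ := by field_simp
      _ ≤ (lam * (‖ulam - uh‖ * ‖e‖) + lam * (‖u₀ - uh‖ * ‖e‖)) * ‖e‖⁻¹ := this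
      _ = lam * ‖u₀ - uh‖ + lam * ‖ulam - uh‖ := by field_simp; ring
end

section
/- Let V be a real inner product space, a : V × V → ℝ a bilinear form that is V-elliptic with constant α > 0, λ ≥ 0, l : V → ℝ linear, and u₀ ∈ V. Let u ∈ V satisfy a(u, v) = l(v) for all v ∈ V, let u^λ ∈ V satisfy a(u^λ, v) + λ⟪u^λ, v⟫ = l(v) + λ⟪u₀, v⟫ for all v ∈ V, and let u_h^λ ∈ V be arbitrary. Then ‖u − u_h^λ‖ ≤ (λ/α)·‖u₀ − u_h^λ‖ + (1 + λ/α)·‖u^λ − u_h^λ‖. -/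
open scoped RealInnerProductSpace

/-- A posteriori bound in the Sobolev norm:
`‖u - uh‖ ≤ (λ/α) ‖u₀ - uh‖ + (1 + λ/α) ‖uλ - uh‖`. -/
theorem aposteriori_sobolev_bound
    {V : Type*} [NormedAddCommGroup V] [InnerProductSpace ℝ V]
    (a : V →ₗ[ℝ] V →ₗ[ℝ] ℝ) (l : V →ₗ[ℝ] ℝ)
    (α : ℝ) (hα : 0 < α) (hell : ∀ v : V, α * ‖v‖ ^ 2 ≤ a v v)
    (lam : ℝ) (hlam : 0 ≤ lam) (u₀ u ulam uh : V)
    (hu : ∀ v : V, a u v = l v)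
    (hulam : ∀ v : V, a ulam v + lam * ⟪ulam, v⟫ = l v + lam * ⟪u₀, v⟫) :
    ‖u - uh‖ ≤ (lam / α) * ‖u₀ - uh‖ + (1 + lam / α) * ‖ulam - uh‖ := by
  set e := u - ulam with he
  have h1 : (a e) e = lam * ⟪ulam - u₀, e⟫ := by
    have h2 := hu e
    have h3 := hulam e
    simp only [he, map_sub, LinearMap.sub_apply, inner_sub_left] at *
    linarith
  have h4 : ⟪ulam - u₀, e⟫ ≤ ‖ulam - u₀‖ * ‖e‖ := real_inner_le_norm _ _
  have h5 : α * ‖e‖ ^ 2 ≤ lam * (‖ulam - u₀‖ * ‖e‖) := by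
    calc α * ‖e‖ ^ 2 ≤ (a e) e := hell e
    _ = lam * ⟪ulam - u₀, e⟫ := h1
    _ ≤ lam * (‖ulam - u₀‖ * ‖e‖) := by
        exact mul_le_mul_of_nonneg_left h4 hlam
  have hN : (0:ℝ) ≤ ‖ulam - u₀‖ := norm_nonneg _
  have h6 : ‖e‖ ≤ (lam / α) * ‖ulam - u₀‖ := by
    rcases eq_or_lt_of_le (norm_nonneg e) with h | h
    · rw [← h]; positivity
    · rw [div_mul_eq_mul_div, le_div_iff₀ hα]
      nlinarith
  have t1 : ‖u - uh‖ ≤ ‖e‖ + ‖ulam - uh‖ := by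
    have := norm_sub_le_norm_sub_add_norm_sub u ulam uh
    simpa [he] using this
  have t2 : ‖ulam - u₀‖ ≤ ‖ulam - uh‖ + ‖u₀ - uh‖ := by
    have := norm_sub_le_norm_sub_add_norm_sub ulam uh u₀
    calc ‖ulam - u₀‖ ≤ ‖ulam - uh‖ + ‖uh - u₀‖ := this
    _ = ‖ulam - uh‖ + ‖u₀ - uh‖ := by rw [norm_sub_rev uh u₀]
  have hla : 0 ≤ lam / α := div_nonneg hlam hα.le
  nlinarith [mul_le_mul_of_nonneg_left t2 hla]
end

section
/- Let V be a real inner product space, a : V × V → ℝ a bilinear form that is V-elliptic with constant α > 0, λ ≥ 0, l : V → ℝ linear, and u₀ ∈ V. Let u ∈ V satisfy a(u, v) = l(v) for all v ∈ V, let u^λ ∈ V satisfy a(u^λ, v) + λ⟪u^λ, v⟫ = l(v) + λ⟪u₀, v⟫ for all v ∈ V, and let u_h^λ ∈ V be arbitrary. Then ‖u − u_h^λ‖ ≤ (λ/α)·‖u₀ − u_h^λ‖ + (√(α + λ)/α)·‖u^λ − u_h^λ‖_{E,λ}, where ‖w‖_{E,λ} := √(a(w, w) + λ‖w‖²). -/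
open scoped RealInnerProductSpace

/-- A posteriori estimate with the regularized energy norm:
`‖u - uh‖ ≤ (λ/α) ‖u₀ - uh‖ + (√(α+λ)/α) ‖uλ - uh‖_{E,λ}` where
`‖w‖_{E,λ} = √(a(w,w) + λ‖w‖²)`. -/
theorem aposteriori_energy_bound
    {V : Type*} [NormedAddCommGroup V] [InnerProductSpace ℝ V]
    (a : V →ₗ[ℝ] V →ₗ[ℝ] ℝ) (l : V →ₗ[ℝ] ℝ)
    (α : ℝ) (hα : 0 < α) (hell : ∀ v : V, α * ‖v‖ ^ 2 ≤ a v v)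
    (lam : ℝ) (hlam : 0 ≤ lam) (u₀ u ulam uh : V)
    (hu : ∀ v : V, a u v = l v)
    (hulam : ∀ v : V, a ulam v + lam * ⟪ulam, v⟫ = l v + lam * ⟪u₀, v⟫) :
    ‖u - uh‖ ≤ (lam / α) * ‖u₀ - uh‖ +
      (Real.sqrt (α + lam) / α) *
        Real.sqrt (a (ulam - uh) (ulam - uh) + lam * ‖ulam - uh‖ ^ 2) := by
  set w := ulam - uh with hw
  set d := u - ulam with hd
  set s := Real.sqrt (α + lam) with hs
  set E := Real.sqrt (a w w + lam * ‖w‖ ^ 2) with hEdef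
  have hal : 0 < α + lam := by linarith
  have hwnn : (0:ℝ) ≤ ‖w‖ := norm_nonneg _
  have hE2 : (α + lam) * ‖w‖ ^ 2 ≤ a w w + lam * ‖w‖ ^ 2 := by
    nlinarith [hell w, sq_nonneg ‖w‖]
  have hwE : s * ‖w‖ ≤ E := by
    have h1 : s * ‖w‖ = Real.sqrt ((α + lam) * ‖w‖ ^ 2) := by
      rw [hs, Real.sqrt_mul hal.le, Real.sqrt_sq hwnn]
    rw [h1, hEdef]
    exact Real.sqrt_le_sqrt hE2
  have hEnn : 0 ≤ E := Real.sqrt_nonneg _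
  have hs2 : s ^ 2 = α + lam := Real.sq_sqrt hal.le
  have hsnn : 0 ≤ s := Real.sqrt_nonneg _
  -- key identity: the error equation
  have hkey : a d d = lam * ⟪ulam - u₀, d⟫ := by
    have h1 := hu d
    have h2 := hulam d
    have h3 : a d d = a u d - a ulam d := by
      rw [hd]; simp only [map_sub, LinearMap.sub_apply]; ring
    rw [h3, h1, inner_sub_left]
    linear_combination -h2
  have hbound : ‖ulam - u₀‖ ≤ ‖w‖ + ‖u₀ - uh‖ := by
    have h : ulam - u₀ = (ulam - uh) - (u₀ - uh) := by abel
    rw [h, ← hw]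
    exact norm_sub_le _ _
  have hdbound : α * ‖d‖ ≤ lam * (‖w‖ + ‖u₀ - uh‖) := by
    rcases eq_or_ne d 0 with h0 | h0
    · rw [h0]
      simp only [norm_zero, mul_zero]
      positivity
    · have hdn : 0 < ‖d‖ := norm_pos_iff.mpr h0
      have h1 : α * ‖d‖ ^ 2 ≤ a d d := hell d
      have h3 : ⟪ulam - u₀, d⟫ ≤ ‖ulam - u₀‖ * ‖d‖ := real_inner_le_norm _ _
      have h5 : lam * ⟪ulam - u₀, d⟫ ≤ lam * ((‖w‖ + ‖u₀ - uh‖) * ‖d‖) := by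
        apply mul_le_mul_of_nonneg_left _ hlam
        calc ⟪ulam - u₀, d⟫ ≤ ‖ulam - u₀‖ * ‖d‖ := h3
          _ ≤ (‖w‖ + ‖u₀ - uh‖) * ‖d‖ := by
              apply mul_le_mul_of_nonneg_right hbound hdn.le
      nlinarith [hkey]
  have htri : ‖u - uh‖ ≤ ‖d‖ + ‖w‖ := by
    have h : u - uh = d + w := by rw [hd, hw]; abel
    rw [h]; exact norm_add_le _ _
  have hgoal : ‖u - uh‖ * α ≤ lam * ‖u₀ - uh‖ + s * E := by
    have h6 : s * (s * ‖w‖) ≤ s * E := mul_le_mul_of_nonneg_left hwE hsnn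
    nlinarith [mul_le_mul_of_nonneg_left htri hα.le]
  rw [div_mul_eq_mul_div, div_mul_eq_mul_div, ← add_div, le_div_iff₀ hα]
  exact hgoal
end

section
/- (Theorem 1.) Let V be a real inner product space, a : V × V → ℝ a bilinear form that is V-elliptic with constant α > 0, λ ≥ 0, l : V → ℝ linear, and u₀ ∈ V. Let u ∈ V satisfy a(u, v) = l(v) for all v ∈ V, let u^λ ∈ V satisfy a(u^λ, v) + λ⟪u^λ, v⟫ = l(v) + λ⟪u₀, v⟫ for all v ∈ V, and let u_h^λ ∈ V be arbitrary. Then ‖u − u_h^λ‖² ≤ (2λ²/α²)·‖u₀ − u_h^λ‖² + (2(α + λ)/α²)·‖u^λ − u_h^λ‖_{E,λ}², where ‖w‖_{E,λ}² := a(w, w) + λ‖w‖². -/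
open scoped RealInnerProductSpace

/-- Theorem 1: squared a posteriori error estimate
`‖u - uh‖² ≤ (2λ²/α²) ‖u₀ - uh‖² + (2(α+λ)/α²) ‖uλ - uh‖_{E,λ}²`
where `‖w‖_{E,λ}² = a(w,w) + λ‖w‖²`. -/
theorem theorem_one_aposteriori
    {V : Type*} [NormedAddCommGroup V] [InnerProductSpace ℝ V]
    (a : V →ₗ[ℝ] V →ₗ[ℝ] ℝ) (l : V →ₗ[ℝ] ℝ)
    (α : ℝ) (hα : 0 < α) (hell : ∀ v : V, α * ‖v‖ ^ 2 ≤ a v v)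
    (lam : ℝ) (hlam : 0 ≤ lam) (u₀ u ulam uh : V)
    (hu : ∀ v : V, a u v = l v)
    (hulam : ∀ v : V, a ulam v + lam * ⟪ulam, v⟫ = l v + lam * ⟪u₀, v⟫) :
    ‖u - uh‖ ^ 2 ≤ (2 * lam ^ 2 / α ^ 2) * ‖u₀ - uh‖ ^ 2 +
      (2 * (α + lam) / α ^ 2) *
        (a (ulam - uh) (ulam - uh) + lam * ‖ulam - uh‖ ^ 2) := by
  set z := u - ulam with hzdef
  set w := ulam - uh with hwdef
  set d := u₀ - uh with hddef
  -- key identity: a z z = lam * ⟪ulam - u₀, z⟫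
  have hz : a z z = lam * (⟪ulam, z⟫ - ⟪u₀, z⟫) := by
    have h1 := hu z
    have h2 := hulam z
    have h3 : a z z = a u z - a ulam z := by
      rw [hzdef]; simp only [map_sub, LinearMap.sub_apply]; ring
    rw [h3, h1]; linarith [h2]
  have hwd : ‖ulam - u₀‖ ≤ ‖w‖ + ‖d‖ := by
    have h : ulam - u₀ = w - d := by rw [hwdef, hddef]; abel
    rw [h]; exact norm_sub_le _ _
  have hZ2 : α * ‖z‖ ^ 2 ≤ lam * ((‖w‖ + ‖d‖) * ‖z‖) := by
    have hcs : ⟪ulam - u₀, z⟫ ≤ ‖ulam - u₀‖ * ‖z‖ := real_inner_le_norm _ _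
    have hinner : ⟪ulam, z⟫ - ⟪u₀, z⟫ = ⟪ulam - u₀, z⟫ := (inner_sub_left _ _ _).symm
    have h1 : a z z ≤ lam * ((‖w‖ + ‖d‖) * ‖z‖) := by
      rw [hz, hinner]
      have : ⟪ulam - u₀, z⟫ ≤ (‖w‖ + ‖d‖) * ‖z‖ :=
        hcs.trans (mul_le_mul_of_nonneg_right hwd (norm_nonneg z))
      exact mul_le_mul_of_nonneg_left this hlam
    exact (hell z).trans h1
  have hZ : α * ‖z‖ ≤ lam * (‖w‖ + ‖d‖) := by
    rcases eq_or_lt_of_le (norm_nonneg z) with h0 | h0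
    · rw [← h0]
      have : 0 ≤ lam * (‖w‖ + ‖d‖) := by positivity
      linarith
    · nlinarith [hZ2]
  have he : ‖u - uh‖ ≤ ‖z‖ + ‖w‖ := by
    have h : u - uh = z + w := by rw [hzdef, hwdef]; abel
    rw [h]; exact norm_add_le _ _
  have hW : α * ‖w‖ ^ 2 ≤ a w w := hell w
  have h4 : α * ‖u - uh‖ ≤ lam * ‖d‖ + (α + lam) * ‖w‖ := by
    have := mul_le_mul_of_nonneg_left he hα.le
    nlinarith [hZ]
  have h5 : (α * ‖u - uh‖) * (α * ‖u - uh‖) ≤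
      (lam * ‖d‖ + (α + lam) * ‖w‖) * (lam * ‖d‖ + (α + lam) * ‖w‖) :=
    mul_self_le_mul_self (by positivity) h4
  have hα2 : (0:ℝ) < α ^ 2 := by positivity
  rw [div_mul_eq_mul_div, div_mul_eq_mul_div, ← add_div, le_div_iff₀ hα2]
  nlinarith [h5, sq_nonneg (lam * ‖d‖ - (α + lam) * ‖w‖),
    mul_le_mul_of_nonneg_left hW (by positivity : (0:ℝ) ≤ 2 * (α + lam)),
    norm_nonneg d, norm_nonneg w]
end
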